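/- arXiv:2010.01022 — 3 statements merged into one kernel-verified Lean document; each statement's English description precedes it below -/
import Mathlib

section
/- For every k ≥ 1, set a(k) = (k/(k+1)) · (k+1)^{-1/k} ∈ (0,1); then a(k) → 1 as k → ∞, and for all l, n ≥ 1 and every nonzero polynomial P ∈ ℤ[X] of degree < n with coefficients bounded in absolute value by l, the number of nonzero roots of P of absolute value less than a(k) is at most k·(1 + log l / log(k+1)). -/
/-!
Write `P = X ^ m * Q` with `Q(0) ≠ 0`; the nonzero roots of `P` are the roots of `Q`, and
`|Q(0)| ≥ 1` because `Q(0)` is a nonzero integer. On the circle of radius `R = k/(k+1)` the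
coefficient bound and the geometric series give `|Q| ≤ l / (1 - R) = l (k+1)`. Jensen's inequality
then bounds the number of roots of `Q` in the closed disc of radius `a(k)` by
`log (l (k+1)) / log (R / a(k))`, and `R / a(k) = (k+1)^(1/k)` by the choice of `a(k)`.
-/

open Polynomial
open scoped Classical

noncomputable def aFun (k : ℕ) : ℝ := ((k : ℝ) / ((k : ℝ) + 1)) * ((k : ℝ) + 1) ^ (-(1 : ℝ) / k)

namespace Polynomial

section NontriviallyNormedField

variable {𝕜 : Type*} [NontriviallyNormedField 𝕜]

theorem analyticOrderAt_eval {p : 𝕜[X]} (hp : p ≠ 0) (x : 𝕜) :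
    analyticOrderAt (eval · p) x = p.rootMultiplicity x := by
  obtain ⟨q, hpq, hq⟩ := p.exists_eq_pow_rootMultiplicity_mul_and_not_dvd hp x
  rw [(AnalyticOnNhd.eval_polynomial p x trivial).analyticOrderAt_eq_natCast]
  refine ⟨(eval · q), AnalyticOnNhd.eval_polynomial q x trivial, ?_, ?_⟩
  · rwa [dvd_iff_isRoot] at hq
  · exact .of_forall fun z => by
      conv_lhs => rw [hpq]
      simp

theorem finsum_divisor_eval {p : 𝕜[X]} (hp : p ≠ 0) (U : Set 𝕜) :
    ∑ᶠ u, MeromorphicOn.divisor (eval · p) U u = ((p.roots.filter (· ∈ U)).card : ℤ) := by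
  have hdiv : ∀ u, MeromorphicOn.divisor (eval · p) U u
      = if u ∈ U then (p.roots.count u : ℤ) else 0 := by
    intro u
    split_ifs with hu
    · rw [MeromorphicOn.AnalyticOnNhd.divisor_apply
        ((AnalyticOnNhd.eval_polynomial p).mono (Set.subset_univ U)) hu, analyticOrderAt_eval hp,
        count_roots]
      rfl
    · exact Function.locallyFinsuppWithin.apply_eq_zero_of_notMem _ hu
  rw [finsum_eq_sum_of_support_subset (s := p.roots.toFinset), ← Multiset.sum_count_eq_card
    (s := p.roots.toFinset) fun a ha => Multiset.mem_toFinset.2 (Multiset.mem_of_mem_filter ha)]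
  · push_cast
    refine Finset.sum_congr rfl fun u _ => ?_
    rw [hdiv, Multiset.count_filter]
    split_ifs <;> simp
  · refine Function.support_subset_iff'.2 fun u hu => ?_
    rw [hdiv, Multiset.count_eq_zero.2 (Multiset.mem_toFinset.not.1 (Finset.mem_coe.not.1 hu))]
    simp

end NontriviallyNormedField

theorem norm_eval_le_of_norm_coeff_le {𝕜 : Type*} [NormedField 𝕜] {p : 𝕜[X]} {l : ℝ}
    (hl : ∀ i, ‖p.coeff i‖ ≤ l) {z : 𝕜} (hz : ‖z‖ < 1) :
    ‖p.eval z‖ ≤ l / (1 - ‖z‖) := by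
  have hl0 : 0 ≤ l := (norm_nonneg _).trans (hl 0)
  rw [eval_eq_sum_range]
  calc ‖∑ i ∈ Finset.range (p.natDegree + 1), p.coeff i * z ^ i‖
      ≤ ∑ i ∈ Finset.range (p.natDegree + 1), l * ‖z‖ ^ i := by
        refine (norm_sum_le _ _).trans (Finset.sum_le_sum fun i _ => ?_)
        rw [norm_mul, norm_pow]
        exact mul_le_mul_of_nonneg_right (hl i) (by positivity)
    _ ≤ l * (1 / (1 - ‖z‖)) := by
        rw [← Finset.mul_sum, Finset.range_eq_Ico, ← pow_zero ‖z‖]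
        exact mul_le_mul_of_nonneg_left (geom_sum_Ico_le_of_lt_one (norm_nonneg z) hz) hl0
    _ = l / (1 - ‖z‖) := mul_one_div l _

theorem card_roots_filter_norm_le_le_log_div_log {p : ℂ[X]} (h0 : p.eval 0 ≠ 0) {r R M : ℝ}
    (hr : 0 < r) (hrR : r < R) (hM : 1 ≤ M) (hbound : ∀ z : ℂ, ‖z‖ = R → ‖p.eval z‖ ≤ M) :
    ((p.roots.filter (‖·‖ ≤ r)).card : ℝ) ≤ Real.log (M / ‖p.eval 0‖) / Real.log (R / r) := by
  have hp : p ≠ 0 := fun h => h0 (by simp [h])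
  have jensen := (AnalyticOnNhd.eval_polynomial p).mono (Set.subset_univ _) |>.sum_divisor_le
    (c := 0) (r := r) (R := R) (abs_pos.2 hr.ne')
    (by rwa [abs_of_pos hr, abs_of_pos (hr.trans hrR)]) hM h0
    (fun z hz => hbound z (by simpa [abs_of_pos (hr.trans hrR)] using hz))
  rw [finsum_divisor_eval hp] at jensen
  simpa [abs_of_pos hr] using jensen

theorem roots_X_pow_mul_filter_ne_zero {K : Type*} [Field K] {q : K[X]} (hq : q.eval 0 ≠ 0)
    (m : ℕ) : (X ^ m * q).roots.filter (· ≠ 0) = q.roots := by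
  have hq0 : q ≠ 0 := fun h => hq (by simp [h])
  rw [roots_mul (mul_ne_zero (pow_ne_zero m X_ne_zero) hq0), roots_X_pow, Multiset.filter_add,
    Multiset.filter_eq_nil.2 (by simp), zero_add, Multiset.filter_eq_self]
  rintro z hz rfl
  exact hq (mem_roots hq0 |>.1 hz)

theorem card_nonzero_roots_le_log_div_log {P : ℤ[X]} (hP : P ≠ 0) {l : ℝ} (hl : 1 ≤ l)
    (hcoeff : ∀ i, |(P.coeff i : ℝ)| ≤ l) {r R : ℝ} (hr : 0 < r) (hrR : r < R) (hR : R < 1) :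
    (((P.map (Int.castRingHom ℂ)).roots.filter (fun z => z ≠ 0 ∧ ‖z‖ ≤ r)).card : ℝ)
      ≤ Real.log (l / (1 - R)) / Real.log (R / r) := by
  obtain ⟨Q, hPQ, hQ⟩ := P.exists_eq_pow_rootMultiplicity_mul_and_not_dvd hP 0
  rw [map_zero, sub_zero] at hPQ hQ
  rw [X_dvd_iff] at hQ
  generalize P.rootMultiplicity 0 = m at hPQ
  subst hPQ
  set Qc := Q.map (Int.castRingHom ℂ)
  have hQc_coeff : ∀ i, ‖Qc.coeff i‖ ≤ l := fun i => by
    simpa [Qc, coeff_X_pow_mul] using hcoeff (i + m)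
  have hQc0 : 1 ≤ ‖Qc.eval 0‖ := by
    rw [← coeff_zero_eq_eval_zero, coeff_map, eq_intCast, Complex.norm_intCast]
    exact_mod_cast Int.one_le_abs hQ
  have hroots : ((X ^ m * Q).map (Int.castRingHom ℂ)).roots.filter (fun z => z ≠ 0 ∧ ‖z‖ ≤ r)
      = Qc.roots.filter (‖·‖ ≤ r) := by
    rw [← roots_X_pow_mul_filter_ne_zero (norm_pos_iff.1 (one_pos.trans_le hQc0)) m,
      Multiset.filter_filter, Polynomial.map_mul, Polynomial.map_pow, map_X]
    exact Multiset.filter_congr fun z _ => and_comm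
  have hM : 1 ≤ l / (1 - R) := hl.trans (le_div_self (by linarith) (by linarith) (by linarith))
  have hbound : ∀ z : ℂ, ‖z‖ = R → ‖Qc.eval z‖ ≤ l / (1 - R) := fun z hz =>
    hz ▸ norm_eval_le_of_norm_coeff_le hQc_coeff (hz ▸ hR)
  rw [hroots]
  refine (card_roots_filter_norm_le_le_log_div_log
    (norm_pos_iff.1 (one_pos.trans_le hQc0)) hr hrR hM hbound).trans ?_
  have hlogRr : 0 ≤ Real.log (R / r) := Real.log_nonneg ((one_le_div hr).2 hrR.le)
  exact div_le_div_of_nonneg_right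
    (Real.log_le_log (by positivity) (div_le_self (by positivity) hQc0)) hlogRr

end Polynomial

open Filter Topology

theorem tendsto_aFun : Tendsto aFun atTop (𝓝 1) := by
  have hpow : Tendsto (fun k : ℕ => ((k : ℝ) + 1) ^ (-(1 : ℝ) / (1 * ((k : ℝ) + 1) + -1)))
      atTop (𝓝 1) :=
    (tendsto_rpow_div_mul_add (-1) 1 (-1) zero_ne_one).comp
      (tendsto_atTop_add_const_right _ 1 tendsto_natCast_atTop_atTop)
  have := (tendsto_natCast_div_add_atTop (1 : ℝ)).mul hpow
  rw [one_mul] at this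
  exact this.congr fun k => by simp [aFun]

theorem aFun_pos {k : ℕ} (hk : 0 < k) : 0 < aFun k := by
  unfold aFun; positivity

theorem aFun_lt_div {k : ℕ} (hk : 0 < k) : aFun k < k / (k + 1) := by
  have hk' : (0 : ℝ) < k := by exact_mod_cast hk
  refine mul_lt_of_lt_one_right (by positivity) (Real.rpow_lt_one_of_one_lt_of_neg ?_ ?_)
  · linarith
  · exact div_neg_of_neg_of_pos (by norm_num) hk'

theorem log_div_aFun {k : ℕ} (hk : 0 < k) :
    Real.log (k / (k + 1) / aFun k) = Real.log (k + 1) / k := by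
  have hk' : (0 : ℝ) < k := by exact_mod_cast hk
  rw [aFun, div_mul_cancel_left₀ (by positivity), ← Real.rpow_neg_one,
    ← Real.rpow_mul (by positivity), Real.log_rpow (by positivity)]
  ring

theorem card_nonzero_roots_lt_aFun_le {k : ℕ} (hk : 0 < k) {P : ℤ[X]} (hP : P ≠ 0) {l : ℝ}
    (hl : 1 ≤ l) (hcoeff : ∀ i, |(P.coeff i : ℝ)| ≤ l) :
    (((P.map (Int.castRingHom ℂ)).roots.filter (fun z => z ≠ 0 ∧ ‖z‖ < aFun k)).card : ℝ)
      ≤ k * (1 + Real.log l / Real.log (k + 1)) := by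
  have hk' : (0 : ℝ) < k := by exact_mod_cast hk
  have hlogk : 0 < Real.log (k + 1) := Real.log_pos (by linarith)
  calc (((P.map (Int.castRingHom ℂ)).roots.filter (fun z => z ≠ 0 ∧ ‖z‖ < aFun k)).card : ℝ)
      ≤ ((P.map (Int.castRingHom ℂ)).roots.filter (fun z => z ≠ 0 ∧ ‖z‖ ≤ aFun k)).card := by
        gcongr
        exact Multiset.monotone_filter_right _ fun z hz => ⟨hz.1, hz.2.le⟩
    _ ≤ Real.log (l / (1 - k / (k + 1))) / Real.log (k / (k + 1) / aFun k) :=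
        card_nonzero_roots_le_log_div_log hP hl hcoeff (aFun_pos hk) (aFun_lt_div hk)
          ((div_lt_one (by positivity)).2 (by linarith))
    _ = k * (1 + Real.log l / Real.log (k + 1)) := by
        rw [log_div_aFun hk, one_sub_div (by positivity), add_sub_cancel_left, one_div,
          div_inv_eq_mul, Real.log_mul (by positivity) (by positivity)]
        field_simp
        ring

/-- `a k ∈ (0,1)`, `a k → 1`, and a nonzero integer polynomial of degree `< n` with
coefficients bounded by `l` has at most `k(1 + log l / log (k+1))` nonzero roots (with
multiplicity) of absolute value less than `a k`. -/
theorem stmt1 :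
    (∀ k : ℕ, 1 ≤ k → aFun k ∈ Set.Ioo (0 : ℝ) 1) ∧
    Filter.Tendsto aFun Filter.atTop (nhds 1) ∧
    ∀ k : ℕ, 1 ≤ k → ∀ l n : ℕ, 1 ≤ l → 1 ≤ n → ∀ P : Polynomial ℤ, P ≠ 0 →
      P.natDegree < n → (∀ i, |P.coeff i| ≤ (l : ℤ)) →
      (((((P.map (Int.castRingHom ℂ)).roots.filter
            (fun z => z ≠ 0 ∧ ‖z‖ < aFun k)).card : ℕ) : ℝ)
          ≤ (k : ℝ) * (1 + Real.log l / Real.log ((k : ℝ) + 1))) := by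
  refine ⟨fun k hk => ⟨aFun_pos hk, (aFun_lt_div hk).trans ?_⟩, tendsto_aFun, ?_⟩
  · exact (div_lt_one (by positivity)).2 (lt_add_one _)
  · intro k hk l n hl _ P hP _ hcoeff
    exact card_nonzero_roots_lt_aFun_le hk hP (by exact_mod_cast hl)
      fun i => by exact_mod_cast hcoeff i
end

section
/- Let Γ be a countable abelian group and let μ, ν be probability measures on Γ with finite Shannon entropy. Then for every n ≥ 1, H(μ * ν^{*n}) - H(μ) ≤ n · (H(μ * ν) - H(μ)), where ν^{*n} is the n-fold convolution of ν with itself and H denotes Shannon entropy. -/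
/-!
Entropies are taken with values in `[0, ∞]`, where all series converge and can be rearranged
freely; finiteness is needed only to cancel `H(ν)` and to return to real numbers at the end.

The heart of the matter is submodularity, `H(μ * ν * σ) + H(μ) ≤ H(μ * ν) + H(μ * σ)` when
`H(ν) < ∞`. With `σ = ν^{*n}` it is the induction step; with `μ = δ₀` it gives
`H(ν * σ) ≤ H(ν) + H(σ)`, which makes `H(μ * ν)` finite, and the iterated inequality then bounds
`H(μ * ν^{*n})`. Writing `μ * σ` as the mixture of the translates `μ(· - z)` with weights `σ(z)`
gives `H(μ * σ) = ∑ σ(z) CE(μ(· - z), μ * σ)` for the cross entropy `CE`, and likewise for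
`μ * ν * σ`. Convolution with `ν` is a Markov kernel, so it does not increase the relative entropy
`CE(p, r) - H(p)`; for `p = μ(· - z)`, `r = μ * σ`, averaged over `z`, this is submodularity.
This data processing inequality is the log-sum inequality on each fibre, once `H(ν)` is cancelled.
-/

/-- Shannon entropy of a discrete probability measure. -/
noncomputable def pmfEntropy {α : Type*} (q : PMF α) : ℝ :=
  ∑' a, Real.negMulLog ((q a).toReal)

/-- Convolution of two discrete probability measures on an additive group. -/
noncomputable def pmfConv {G : Type*} [AddCommGroup G] (μ ν : PMF G) : PMF G :=
  μ.bind fun x => ν.map fun y => x + y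

/-- `n`-fold convolution power. -/
noncomputable def pmfConvPow {G : Type*} [AddCommGroup G] (ν : PMF G) : ℕ → PMF G
  | 0 => PMF.pure 0
  | n + 1 => pmfConv (pmfConvPow ν n) ν

open scoped ENNReal

namespace ENNReal

/-- Since `Real.log 0 = 0`, also `negLog 0 = 0` rather than `∞`: this is why the cross-entropy
statements below carry support hypotheses. -/
noncomputable abbrev negLog (t : ℝ≥0∞) : ℝ≥0∞ := ENNReal.ofReal (-Real.log t.toReal)

lemma negLog_ne_top (t : ℝ≥0∞) : negLog t ≠ ∞ := ofReal_ne_top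

@[simp] lemma negLog_one : negLog 1 = 0 := by simp

lemma toReal_le_one {t : ℝ≥0∞} (ht : t ≤ 1) : t.toReal ≤ 1 := by
  simpa using toReal_mono one_ne_top ht

lemma toReal_negLog {t : ℝ≥0∞} (ht : t ≤ 1) : (negLog t).toReal = -Real.log t.toReal :=
  toReal_ofReal <| neg_nonneg.2 <| Real.log_nonpos toReal_nonneg (toReal_le_one ht)

lemma mul_negLog_self_eq_ofReal {t : ℝ≥0∞} (ht : t ≠ ∞) :
    t * negLog t = ENNReal.ofReal (Real.negMulLog t.toReal) := by
  nth_rewrite 1 [← ofReal_toReal ht]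
  rw [negLog, ← ofReal_mul toReal_nonneg, Real.negMulLog, neg_mul_comm]

lemma negLog_mul {a b : ℝ≥0∞} (ha0 : a ≠ 0) (hb0 : b ≠ 0) (ha : a ≤ 1) (hb : b ≤ 1) :
    negLog (a * b) = negLog a + negLog b := by
  have ha' : a ≠ ∞ := ne_top_of_le_ne_top one_ne_top ha
  have hb' : b ≠ ∞ := ne_top_of_le_ne_top one_ne_top hb
  rw [← toReal_eq_toReal_iff' (negLog_ne_top _) (add_ne_top.2 ⟨negLog_ne_top _, negLog_ne_top _⟩),
    toReal_add (negLog_ne_top _) (negLog_ne_top _), toReal_negLog (mul_le_one' ha hb),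
    toReal_negLog ha, toReal_negLog hb, toReal_mul,
    Real.log_mul (toReal_ne_zero.2 ⟨ha0, ha'⟩) (toReal_ne_zero.2 ⟨hb0, hb'⟩), neg_add]

lemma mul_mul_negLog_mul {c x y : ℝ≥0∞} (hc : c ≤ 1) (hy : y ≤ 1) (hxy : x ≠ 0 → y ≠ 0) :
    c * x * negLog (c * y) = c * negLog c * x + c * (x * negLog y) := by
  rcases eq_or_ne c 0 with rfl | hc0
  · simp
  rcases eq_or_ne x 0 with rfl | hx0
  · simp
  rw [negLog_mul hc0 (hxy hx0) hc hy]
  ring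

/-- `x - t ≤ x log (x / t)` for `x = a`, `t = b A / B`, with every term moved to the side where it
is nonnegative. -/
lemma add_mul_negLog_le {a b A B : ℝ≥0∞} (haA : a ≤ A) (hA : A ≤ 1) (hbB : b ≤ B) (hB : B ≤ 1)
    (hab : a ≠ 0 → b ≠ 0) :
    a + a * negLog a + a * negLog B ≤ b * (A / B) + a * negLog b + a * negLog A := by
  rcases eq_or_ne a 0 with rfl | ha0
  · simp
  have hb0 := hab ha0
  have hA0 : A ≠ 0 := (pos_of_ne_zero ha0 |>.trans_le haA).ne'
  have hB0 : B ≠ 0 := (pos_of_ne_zero hb0 |>.trans_le hbB).ne'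
  have hA' : A ≠ ∞ := ne_top_of_le_ne_top one_ne_top hA
  have hB' : B ≠ ∞ := ne_top_of_le_ne_top one_ne_top hB
  have ha' : a ≠ ∞ := ne_top_of_le_ne_top hA' haA
  have hb' : b ≠ ∞ := ne_top_of_le_ne_top hB' hbB
  rw [← toReal_le_toReal (by finiteness) (by finiteness)]
  simp (disch := finiteness) only [toReal_add, toReal_mul, toReal_div, toReal_negLog hA,
    toReal_negLog hB, toReal_negLog (haA.trans hA), toReal_negLog (hbB.trans hB)]
  have hx := toReal_pos ha0 ha'
  have hy := toReal_pos hb0 hb'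
  have hX := toReal_pos hA0 hA'
  have hY := toReal_pos hB0 hB'
  have hlog := Real.log_le_sub_one_of_pos (x := b.toReal * A.toReal / (B.toReal * a.toReal))
    (by positivity)
  rw [Real.log_div (by positivity) (by positivity), Real.log_mul hy.ne' hX.ne',
    Real.log_mul hY.ne' hx.ne'] at hlog
  have e : a.toReal * (b.toReal * A.toReal / (B.toReal * a.toReal) - 1)
      = b.toReal * (A.toReal / B.toReal) - a.toReal := by field_simp
  nlinarith [mul_le_mul_of_nonneg_left hlog hx.le]

lemma log_sum_inequality {ι : Type*} {a b : ι → ℝ≥0∞} (ha : ∑' i, a i ≤ 1) (hb : ∑' i, b i ≤ 1)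
    (hab : ∀ i, a i ≠ 0 → b i ≠ 0) :
    (∑' i, a i) * negLog (∑' i, b i) + ∑' i, a i * negLog (a i) ≤
      (∑' i, a i) * negLog (∑' i, a i) + ∑' i, a i * negLog (b i) := by
  set A := ∑' i, a i
  set B := ∑' i, b i
  rcases eq_or_ne A 0 with hA0 | hA0
  · simp [hA0, ENNReal.tsum_eq_zero.1 hA0]
  obtain ⟨i, hi⟩ : ∃ i, a i ≠ 0 := by simpa [A, ENNReal.tsum_eq_zero] using hA0
  have hB0 : B ≠ 0 := (pos_of_ne_zero (hab i hi) |>.trans_le (ENNReal.le_tsum i)).ne'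
  have hsum := ENNReal.tsum_le_tsum fun i =>
    add_mul_negLog_le (ENNReal.le_tsum i) ha (ENNReal.le_tsum i) hb (hab i)
  simp only [ENNReal.tsum_add, ENNReal.tsum_mul_right] at hsum
  rw [ENNReal.mul_div_cancel hB0 (ne_top_of_le_ne_top one_ne_top hb), add_assoc, add_assoc,
    ENNReal.add_le_add_iff_left (ne_top_of_le_ne_top one_ne_top ha)] at hsum
  rwa [add_comm, add_comm (A * _)]

end ENNReal

section Convolution

variable {G : Type*} [AddCommGroup G]

lemma pmfConv_eq_bind_bind (μ ν : PMF G) :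
    pmfConv μ ν = μ.bind fun x => ν.bind fun y => PMF.pure (x + y) := rfl

lemma pmfConv_comm (μ ν : PMF G) : pmfConv μ ν = pmfConv ν μ := by
  simp only [pmfConv_eq_bind_bind]
  rw [PMF.bind_comm]
  simp only [add_comm]

lemma pmfConv_assoc (μ ν σ : PMF G) :
    pmfConv (pmfConv μ ν) σ = pmfConv μ (pmfConv ν σ) := by
  simp [pmfConv_eq_bind_bind, PMF.bind_bind, add_assoc]

lemma pmfConv_left_comm (μ ν σ : PMF G) :
    pmfConv μ (pmfConv ν σ) = pmfConv ν (pmfConv μ σ) := by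
  rw [← pmfConv_assoc, pmfConv_comm μ ν, pmfConv_assoc]

lemma pmfConv_pure_zero (μ : PMF G) : pmfConv μ (PMF.pure 0) = μ := by
  simp [pmfConv_eq_bind_bind, PMF.bind_pure]

lemma pmfConv_apply (μ ν : PMF G) (w : G) : pmfConv μ ν w = ∑' x, μ x * ν (w - x) := by
  simp only [pmfConv_eq_bind_bind, PMF.bind_apply, PMF.pure_apply, mul_ite, mul_one, mul_zero]
  refine tsum_congr fun x => congrArg _ ?_
  rw [tsum_eq_single (w - x) fun y hy => if_neg fun h => hy (by rw [h]; abel)]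
  simp

lemma pmfConv_pure_apply (μ : PMF G) (z w : G) : pmfConv μ (PMF.pure z) w = μ (w - z) := by
  simp only [pmfConv_eq_bind_bind, PMF.bind_apply, PMF.pure_bind, PMF.pure_apply, mul_ite,
    mul_one, mul_zero]
  rw [tsum_eq_single (w - z) fun y hy => if_neg fun h => hy (by rw [h]; abel)]
  simp

lemma tsum_tsum_mul_sub (α β : G → ℝ≥0∞) :
    ∑' w, ∑' y, α y * β (w - y) = (∑' y, α y) * ∑' x, β x := by
  rw [ENNReal.tsum_comm, ← ENNReal.tsum_mul_right]
  refine tsum_congr fun y => ?_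
  rw [ENNReal.tsum_mul_left]
  exact congrArg _ ((Equiv.subRight y).tsum_eq β)

end Convolution

namespace PMF

open ENNReal

section Entropy

variable {α : Type*}

noncomputable def crossEntropy (p r : PMF α) : ℝ≥0∞ := ∑' x, p x * negLog (r x)

noncomputable def entropy (p : PMF α) : ℝ≥0∞ := crossEntropy p p

lemma crossEntropy_self (p : PMF α) : crossEntropy p p = p.entropy := rfl

@[simp] lemma entropy_pure (a : α) : (pure a).entropy = 0 := by
  simp [entropy, crossEntropy, pure_apply]

lemma entropy_eq_tsum_ofReal (p : PMF α) :
    p.entropy = ∑' a, ENNReal.ofReal (Real.negMulLog (p a).toReal) :=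
  tsum_congr fun a => mul_negLog_self_eq_ofReal (p.apply_ne_top a)

lemma entropy_ne_top_of_summable {p : PMF α}
    (h : Summable fun a => Real.negMulLog (p a).toReal) : p.entropy ≠ ∞ := by
  rw [entropy_eq_tsum_ofReal, ← ofReal_tsum_of_nonneg (fun a => Real.negMulLog_nonneg
    toReal_nonneg (toReal_le_one (p.coe_le_one a))) h]
  exact ofReal_ne_top

lemma pmfEntropy_eq_toReal_entropy (p : PMF α) : pmfEntropy p = p.entropy.toReal := by
  rw [entropy_eq_tsum_ofReal, tsum_toReal_eq fun _ => ofReal_ne_top]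
  exact tsum_congr fun a => (toReal_ofReal (Real.negMulLog_nonneg toReal_nonneg
    (toReal_le_one (p.coe_le_one a)))).symm

end Entropy

variable {G : Type*} [AddCommGroup G]

lemma crossEntropy_conv_pure (p r : PMF G) (z : G) :
    crossEntropy (pmfConv p (pure z)) (pmfConv r (pure z)) = crossEntropy p r := by
  simp only [crossEntropy, pmfConv_pure_apply]
  exact (Equiv.subRight z).tsum_eq fun x => p x * negLog (r x)

lemma entropy_conv_pure (p : PMF G) (z : G) : (pmfConv p (pure z)).entropy = p.entropy :=
  crossEntropy_conv_pure p p z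

lemma crossEntropy_conv_eq_tsum (f s r : PMF G) :
    crossEntropy (pmfConv f s) r = ∑' z, s z * crossEntropy (pmfConv f (pure z)) r := by
  simp only [crossEntropy, pmfConv_pure_apply, pmfConv_comm f s, pmfConv_apply s f,
    ← ENNReal.tsum_mul_right, ← ENNReal.tsum_mul_left, mul_assoc]
  exact ENNReal.tsum_comm

theorem crossEntropy_conv_add_entropy_le {p r : PMF G} (q : PMF G) (hq : q.entropy ≠ ∞)
    (hpr : p.support ⊆ r.support) :
    crossEntropy (pmfConv q p) (pmfConv q r) + p.entropy ≤
      (pmfConv q p).entropy + crossEntropy p r := by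
  have hw (w : G) : pmfConv q p w * negLog (pmfConv q r w) +
        ∑' y, (q y * negLog (q y) * p (w - y) + q y * (p (w - y) * negLog (p (w - y)))) ≤
      pmfConv q p w * negLog (pmfConv q p w) +
        ∑' y, (q y * negLog (q y) * p (w - y) + q y * (p (w - y) * negLog (r (w - y)))) := by
    have h := log_sum_inequality (a := fun y => q y * p (w - y)) (b := fun y => q y * r (w - y))
      (by rw [← pmfConv_apply]; exact coe_le_one _ _) (by rw [← pmfConv_apply]; exact coe_le_one _ _)
      (fun y h => by
        simp only [ne_eq, mul_eq_zero, not_or] at h ⊢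
        exact ⟨h.1, hpr h.2⟩)
    simpa only [← pmfConv_apply, mul_mul_negLog_mul (q.coe_le_one _) (p.coe_le_one _) id,
      mul_mul_negLog_mul (q.coe_le_one _) (r.coe_le_one _) fun h => hpr h] using h
  have h := ENNReal.tsum_le_tsum hw
  simp only [ENNReal.tsum_add, tsum_tsum_mul_sub, tsum_tsum_mul_sub (⇑q) fun x => p x * negLog (p x),
    tsum_tsum_mul_sub (⇑q) fun x => p x * negLog (r x), tsum_coe, mul_one, one_mul] at h
  change crossEntropy (pmfConv q p) (pmfConv q r) + (q.entropy + p.entropy) ≤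
    (pmfConv q p).entropy + (q.entropy + crossEntropy p r) at h
  rw [add_left_comm, add_left_comm _ q.entropy] at h
  exact (ENNReal.add_le_add_iff_left hq).1 h

theorem entropy_conv_conv_add_entropy_le (f q s : PMF G) (hq : q.entropy ≠ ∞) :
    (pmfConv (pmfConv f q) s).entropy + f.entropy ≤
      (pmfConv f q).entropy + (pmfConv f s).entropy := by
  have hz (z : G) :
      s z * (crossEntropy (pmfConv (pmfConv f q) (pure z)) (pmfConv (pmfConv f q) s) + f.entropy) ≤
        s z * ((pmfConv f q).entropy + crossEntropy (pmfConv f (pure z)) (pmfConv f s)) := by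
    rcases eq_or_ne (s z) 0 with hs | hs
    · simp [hs]
    gcongr s z * ?_
    have hsupp : (pmfConv f (pure z)).support ⊆ (pmfConv f s).support := by
      intro u hu
      rw [mem_support_iff, pmfConv_pure_apply] at hu
      rw [mem_support_iff, pmfConv_apply, ENNReal.summable.tsum_ne_zero_iff]
      exact ⟨u - z, by simp [hu, hs]⟩
    have h := crossEntropy_conv_add_entropy_le q hq hsupp
    rwa [pmfConv_left_comm q f, pmfConv_left_comm q f, ← pmfConv_assoc, ← pmfConv_assoc,
      entropy_conv_pure, entropy_conv_pure] at h
  have h := ENNReal.tsum_le_tsum hz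
  simpa only [mul_add, ENNReal.tsum_add, ENNReal.tsum_mul_right, tsum_coe, one_mul,
    ← crossEntropy_conv_eq_tsum, crossEntropy_self] using h

theorem entropy_conv_le (p q : PMF G) (hq : q.entropy ≠ ∞) :
    (pmfConv p q).entropy ≤ p.entropy + q.entropy := by
  simpa [pmfConv_comm (pure (0 : G)), pmfConv_pure_zero, pmfConv_comm q p, add_comm] using
    entropy_conv_conv_add_entropy_le (pure 0) q p hq

theorem entropy_conv_convPow_add_le (μ ν : PMF G) (hν : ν.entropy ≠ ∞) (n : ℕ) :
    (pmfConv μ (pmfConvPow ν n)).entropy + n * μ.entropy ≤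
      n * (pmfConv μ ν).entropy + μ.entropy := by
  induction n with
  | zero => simp [pmfConvPow, pmfConv_pure_zero]
  | succ n ih =>
    have hstep : pmfConv μ (pmfConvPow ν (n + 1)) = pmfConv (pmfConv μ ν) (pmfConvPow ν n) := by
      rw [pmfConvPow, pmfConv_comm _ ν, pmfConv_assoc]
    calc (pmfConv μ (pmfConvPow ν (n + 1))).entropy + ↑(n + 1) * μ.entropy
        = ((pmfConv (pmfConv μ ν) (pmfConvPow ν n)).entropy + μ.entropy) + n * μ.entropy := by
          rw [hstep]; push_cast; ring
      _ ≤ ((pmfConv μ ν).entropy + (pmfConv μ (pmfConvPow ν n)).entropy) + n * μ.entropy := by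
          gcongr ?_ + _
          exact entropy_conv_conv_add_entropy_le μ ν _ hν
      _ ≤ (pmfConv μ ν).entropy + (n * (pmfConv μ ν).entropy + μ.entropy) := by
          rw [add_assoc]; gcongr
      _ = ↑(n + 1) * (pmfConv μ ν).entropy + μ.entropy := by push_cast; ring

end PMF

open PMF ENNReal in
theorem stmt6_general {G : Type*} [AddCommGroup G] (μ ν : PMF G)
    (hμ : Summable fun a => Real.negMulLog ((μ a).toReal))
    (hν : Summable fun a => Real.negMulLog ((ν a).toReal)) :
    ∀ n : ℕ, 1 ≤ n →
      pmfEntropy (pmfConv μ (pmfConvPow ν n)) - pmfEntropy μ ≤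
        (n : ℝ) * (pmfEntropy (pmfConv μ ν) - pmfEntropy μ) := by
  intro n _
  have hμ' := entropy_ne_top_of_summable hμ
  have hν' := entropy_ne_top_of_summable hν
  have hμν : (pmfConv μ ν).entropy ≠ ∞ :=
    ne_top_of_le_ne_top (add_ne_top.2 ⟨hμ', hν'⟩) (entropy_conv_le μ ν hν')
  have h := entropy_conv_convPow_add_le μ ν hν' n
  have hμνn : (pmfConv μ (pmfConvPow ν n)).entropy ≠ ∞ :=
    ne_top_of_le_ne_top (by finiteness) (le_self_add.trans h)
  have h' := (toReal_le_toReal (by finiteness) (by finiteness)).2 h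
  rw [toReal_add hμνn (by finiteness), toReal_add (by finiteness) hμ', toReal_mul,
    toReal_mul, toReal_natCast] at h'
  simp only [pmfEntropy_eq_toReal_entropy]
  linarith

/-- Kaimanovich–Vershik: for probability measures `μ, ν` of finite entropy on a countable
abelian group, `H(μ * ν^{*n}) - H(μ) ≤ n (H(μ*ν) - H(μ))`. -/
theorem stmt6 {G : Type*} [AddCommGroup G] [Countable G] (μ ν : PMF G)
    (hμ : Summable fun a => Real.negMulLog ((μ a).toReal))
    (hν : Summable fun a => Real.negMulLog ((ν a).toReal)) :
    ∀ n : ℕ, 1 ≤ n →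
      pmfEntropy (pmfConv μ (pmfConvPow ν n)) - pmfEntropy μ ≤
        (n : ℝ) * (pmfEntropy (pmfConv μ ν) - pmfEntropy μ) :=
  stmt6_general μ ν hμ hν
end

section
/- For every M > 1 there exists η > 0 such that: for every probability measure μ on a countable torsion-free abelian group (e.g. the additive group of a field of characteristic 0) with H(μ) < M, and for all distinct elements a, b of the group, setting ν = (δ_a + δ_b)/2, one has H(ν * μ) > H(μ) + η. -/
/-- Torsion-free additive monoid (definition removed from Mathlib; restored with its old meaning). -/
def AddMonoid.IsTorsionFree (G : Type*) [AddMonoid G] : Prop :=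
  ∀ g : G, g ≠ 0 → ¬IsOfFinAddOrder g


/-!
Put `c = a - b` and `p y = μ y`. The entropy gain `H(ν * μ) - H(μ)` is the sum over `y` of
the Jensen–Shannon gaps between `p y` and `p (y + c)`, and each gap is at least a quarter of the
Hellinger term `(√(p y) - √(p (y + c)))²`; so the gain is at least `d² / 4`, where `d` is the
`ℓ²` distance between `√p` and its translate by `c`.

Since `H(μ) < M`, some atom `x` has `p x > e^{-M}`. Along the orbit `x, x + c, x + 2c, …`, which
never repeats because `G` is torsion-free, `√p` drops by at most `d` per step. If we had
`d < e^{-M/2} / (2n)` with `n ≥ 4 e^M`, the first `n + 1` points of the orbit would each carry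
mass more than `e^{-M} / 4`, for a total mass above `1`.
-/

open Real

section Pointwise

lemma two_mul_sub_sqrt_mul_sqrt_le_mul_log_sub_log {u v : ℝ} (hu : 0 ≤ u) (hv : 0 < v) :
    2 * (u - √u * √v) ≤ u * (log u - log v) := by
  rcases hu.eq_or_lt with rfl | hu
  · simp
  have hlog : log (√v / √u) ≤ √v / √u - 1 := log_le_sub_one_of_pos (by positivity)
  rw [log_div (sqrt_pos.2 hv).ne' (sqrt_pos.2 hu).ne', log_sqrt hv.le, log_sqrt hu.le] at hlog
  have hdiv : u * (√v / √u) = √u * √v := by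
    nth_rewrite 1 [← mul_self_sqrt hu.le]
    field_simp
  nlinarith [mul_le_mul_of_nonneg_left hlog hu.le]

lemma sq_sub_div_four_le_of_sq_eq {s t w : ℝ} (hs : 0 ≤ s) (ht : 0 ≤ t) (hw : 0 ≤ w)
    (hw2 : w ^ 2 = (s ^ 2 + t ^ 2) / 2) :
    (s - t) ^ 2 / 4 ≤ s ^ 2 + t ^ 2 - (s + t) * w := by
  -- the two squares differ by `(s - t) ^ 4 / 16`
  have hsq : ((s + t) * w) ^ 2 ≤ ((3 * (s ^ 2 + t ^ 2) + 2 * s * t) / 4) ^ 2 := by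
    rw [mul_pow, hw2]
    nlinarith [sq_nonneg ((s - t) ^ 2)]
  have := (pow_le_pow_iff_left₀ (by positivity) (by positivity) two_ne_zero).1 hsq
  linarith

lemma sq_sqrt_sub_sqrt_div_four_le_negMulLog_midpoint_sub {p q : ℝ} (hp : 0 ≤ p) (hq : 0 ≤ q) :
    (√p - √q) ^ 2 / 4 ≤ negMulLog ((p + q) / 2) - (negMulLog p + negMulLog q) / 2 := by
  rcases (by positivity : (0 : ℝ) ≤ (p + q) / 2).eq_or_lt with hm | hm
  · obtain rfl : p = 0 := by linarith
    obtain rfl : q = 0 := by linarith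
    simp
  have hp' := two_mul_sub_sqrt_mul_sqrt_le_mul_log_sub_log hp hm
  have hq' := two_mul_sub_sqrt_mul_sqrt_le_mul_log_sub_log hq hm
  have hsqrt := sq_sub_div_four_le_of_sq_eq (sqrt_nonneg p) (sqrt_nonneg q)
    (sqrt_nonneg ((p + q) / 2)) (by rw [sq_sqrt hp, sq_sqrt hq, sq_sqrt hm.le])
  rw [sq_sqrt hp, sq_sqrt hq] at hsqrt
  have hgap : negMulLog ((p + q) / 2) - (negMulLog p + negMulLog q) / 2
      = (p * (log p - log ((p + q) / 2)) + q * (log q - log ((p + q) / 2))) / 2 := by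
    simp only [negMulLog]
    ring
  rw [hgap]
  linarith

lemma negMulLog_add_le {p q : ℝ} (hp : 0 ≤ p) (hq : 0 ≤ q) :
    negMulLog (p + q) ≤ negMulLog p + negMulLog q := by
  have key : ∀ {x y : ℝ}, 0 ≤ x → 0 ≤ y → x * log x ≤ x * log (x + y) := by
    intro x y hx hy
    rcases hx.eq_or_lt with rfl | hx
    · simp
    exact mul_le_mul_of_nonneg_left (log_le_log hx (by linarith)) hx.le
  have hq' := key hq hp
  rw [add_comm q p] at hq'
  simp only [negMulLog]
  linarith [key hp hq]

lemma negMulLog_midpoint_le {p q : ℝ} (hp : 0 ≤ p) (hq : 0 ≤ q) :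
    negMulLog ((p + q) / 2) ≤ (negMulLog p + negMulLog q) / 2 + log 2 * ((p + q) / 2) := by
  have hhalf : negMulLog ((p + q) / 2) = negMulLog (p + q) / 2 + log 2 * ((p + q) / 2) := by
    rw [div_eq_mul_inv, negMulLog_mul]
    simp only [negMulLog, log_inv]
    ring
  linarith [negMulLog_add_le hp hq]

lemma mul_le_negMulLog_of_le_exp_neg {x M : ℝ} (hx : 0 ≤ x) (hxM : x ≤ exp (-M)) :
    M * x ≤ negMulLog x := by
  rcases hx.eq_or_lt with rfl | hx
  · simp
  have hlog : log x ≤ -M := (log_le_iff_le_exp hx).2 hxM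
  simp only [negMulLog]
  nlinarith

end Pointwise

lemma exists_exp_neg_lt_of_tsum_negMulLog_lt {ι : Type*} {p : ι → ℝ} {M : ℝ}
    (hp0 : ∀ i, 0 ≤ p i) (hp : Summable p) (hp1 : ∑' i, p i = 1)
    (hH : Summable fun i => negMulLog (p i)) (hM : ∑' i, negMulLog (p i) < M) :
    ∃ i, exp (-M) < p i := by
  by_contra! h
  have : M ≤ ∑' i, negMulLog (p i) :=
    calc M = ∑' i, M * p i := by rw [tsum_mul_left, hp1, mul_one]
      _ ≤ ∑' i, negMulLog (p i) :=
        (hp.mul_left M).tsum_le_tsum (fun i => mul_le_negMulLog_of_le_exp_neg (hp0 i) (h i)) hH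
  linarith

lemma abs_le_sqrt_tsum_sq {ι : Type*} {g : ι → ℝ} (hg : Summable fun i => g i ^ 2) (i : ι) :
    |g i| ≤ √(∑' j, g j ^ 2) := by
  rw [← sqrt_sq_eq_abs]
  exact sqrt_le_sqrt (hg.le_tsum i fun j _ => sq_nonneg (g j))

section Translate

variable {G : Type*} [AddCommGroup G]

lemma summable_sq_sub_apply_add {f : G → ℝ} (hf : Summable fun y => f y ^ 2) (c : G) :
    Summable fun y => (f y - f (y + c)) ^ 2 := by
  have hfc : Summable fun y => f (y + c) ^ 2 :=
    (Equiv.addRight c).summable_iff (f := fun y => f y ^ 2) |>.2 hf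
  refine .of_nonneg_of_le (fun _ => sq_nonneg _) (fun y => ?_)
    ((hf.mul_left 2).add (hfc.mul_left 2))
  nlinarith [sq_nonneg (f y + f (y + c))]

lemma sub_mul_le_apply_add_nsmul {f : G → ℝ} {c : G} {d : ℝ}
    (hd : ∀ y, f y - f (y + c) ≤ d) (x : G) (k : ℕ) : f x - k * d ≤ f (x + k • c) := by
  induction k with
  | zero => simp
  | succ k ih =>
    rw [succ_nsmul, ← add_assoc]
    push_cast
    linarith [hd (x + k • c)]

lemma sum_range_apply_add_nsmul_le_tsum {g : G → ℝ} (hg : Summable g) (hg0 : ∀ y, 0 ≤ g y)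
    {c : G} (hc : ¬IsOfFinAddOrder c) (x : G) (N : ℕ) :
    ∑ k ∈ Finset.range N, g (x + k • c) ≤ ∑' y, g y := by
  have hinj : Function.Injective fun k : ℕ => x + k • c :=
    (add_right_injective x).comp (injective_nsmul_iff_not_isOfFinAddOrder.2 hc)
  calc ∑ k ∈ Finset.range N, g (x + k • c) ≤ ∑' k : ℕ, g (x + k • c) :=
        (hg.comp_injective hinj).sum_le_tsum _ fun k _ => hg0 _
    _ ≤ ∑' y, g y := tsum_comp_le_tsum_of_inj hg hg0 hinj

lemma succ_mul_sq_sub_le_one {f : G → ℝ} (hf : Summable fun y => f y ^ 2)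
    (hf1 : ∑' y, f y ^ 2 ≤ 1) {c : G} (hc : ¬IsOfFinAddOrder c) {x : G} {n : ℕ}
    (hn : n * √(∑' y, (f y - f (y + c)) ^ 2) ≤ f x) :
    (n + 1) * (f x - n * √(∑' y, (f y - f (y + c)) ^ 2)) ^ 2 ≤ 1 := by
  set d := √(∑' y, (f y - f (y + c)) ^ 2)
  have hstep (y : G) : f y - f (y + c) ≤ d :=
    (le_abs_self _).trans (abs_le_sqrt_tsum_sq (summable_sq_sub_apply_add hf c) y)
  have hterm : ∀ k ∈ Finset.range (n + 1), (f x - n * d) ^ 2 ≤ f (x + k • c) ^ 2 := by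
    intro k hk
    have hkn : (k : ℝ) ≤ n := by exact_mod_cast Finset.mem_range_succ_iff.1 hk
    have hdrop := sub_mul_le_apply_add_nsmul hstep x k
    have hd0 : 0 ≤ d := sqrt_nonneg _
    exact pow_le_pow_left₀ (by linarith) (by nlinarith) 2
  calc (n + 1) * (f x - n * d) ^ 2 = ∑ k ∈ Finset.range (n + 1), (f x - n * d) ^ 2 := by simp
    _ ≤ ∑ k ∈ Finset.range (n + 1), f (x + k • c) ^ 2 := Finset.sum_le_sum hterm
    _ ≤ ∑' y, f y ^ 2 := sum_range_apply_add_nsmul_le_tsum hf (fun _ => sq_nonneg _) hc x _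
    _ ≤ 1 := hf1

lemma div_two_mul_le_sqrt_tsum_sq_sub_apply_add {f : G → ℝ} (hf : Summable fun y => f y ^ 2)
    (hf1 : ∑' y, f y ^ 2 ≤ 1) {c : G} (hc : ¬IsOfFinAddOrder c) {x : G} {n : ℕ} (hn : 0 < n)
    (hx : 4 ≤ (n + 1) * f x ^ 2) :
    f x / (2 * n) ≤ √(∑' y, (f y - f (y + c)) ^ 2) := by
  set d := √(∑' y, (f y - f (y + c)) ^ 2)
  by_contra! hd
  have hn' : (0 : ℝ) < n := by exact_mod_cast hn
  have hnd : n * d < f x / 2 := by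
    rw [lt_div_iff₀ (by positivity)] at hd
    linarith
  have hnd0 : 0 ≤ n * d := by positivity
  have hbound := succ_mul_sq_sub_le_one hf hf1 hc (n := n) (by linarith)
  have : (f x / 2) ^ 2 < (f x - n * d) ^ 2 := pow_lt_pow_left₀ (by linarith) (by linarith) two_ne_zero
  nlinarith [mul_lt_mul_of_pos_left this (by positivity : (0 : ℝ) < n + 1)]

variable {p : G → ℝ}

lemma summable_negMulLog_midpoint (hp0 : ∀ y, 0 ≤ p y) (hp : Summable p)
    (hH : Summable fun y => negMulLog (p y)) (c : G) :
    Summable fun y => negMulLog ((p y + p (y + c)) / 2) := by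
  have hpc : Summable fun y => p (y + c) := (Equiv.addRight c).summable_iff (f := p) |>.2 hp
  have hHc : Summable fun y => negMulLog (p (y + c)) :=
    (Equiv.addRight c).summable_iff (f := fun y => negMulLog (p y)) |>.2 hH
  have havg := (hH.add hHc).div_const 2
  have hgap : Summable fun y =>
      negMulLog ((p y + p (y + c)) / 2) - (negMulLog (p y) + negMulLog (p (y + c))) / 2 := by
    refine .of_nonneg_of_le (fun y => ?_) (fun y => ?_) (((hp.add hpc).div_const 2).mul_left (log 2))
    · linarith [sq_sqrt_sub_sqrt_div_four_le_negMulLog_midpoint_sub (hp0 y) (hp0 (y + c)),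
        sq_nonneg (√(p y) - √(p (y + c)))]
    · linarith [negMulLog_midpoint_le (hp0 y) (hp0 (y + c))]
  exact (hgap.add havg).congr fun y => by ring

lemma tsum_sq_sqrt_sub_sqrt_div_four_le (hp0 : ∀ y, 0 ≤ p y) (hp : Summable p)
    (hH : Summable fun y => negMulLog (p y)) (c : G) :
    (∑' y, (√(p y) - √(p (y + c))) ^ 2) / 4
      ≤ ∑' y, negMulLog ((p y + p (y + c)) / 2) - ∑' y, negMulLog (p y) := by
  have hHc : Summable fun y => negMulLog (p (y + c)) :=
    (Equiv.addRight c).summable_iff (f := fun y => negMulLog (p y)) |>.2 hH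
  have htc : ∑' y, negMulLog (p (y + c)) = ∑' y, negMulLog (p y) :=
    (Equiv.addRight c).tsum_eq fun y => negMulLog (p y)
  have havg : ∑' y, (negMulLog (p y) + negMulLog (p (y + c))) / 2 = ∑' y, negMulLog (p y) := by
    rw [tsum_div_const, hH.tsum_add hHc, htc]
    ring
  have hsqrt : Summable fun y => √(p y) ^ 2 := hp.congr fun y => (sq_sqrt (hp0 y)).symm
  rw [← havg, ← (summable_negMulLog_midpoint hp0 hp hH c).tsum_sub ((hH.add hHc).div_const 2),
    ← tsum_div_const]
  exact ((summable_sq_sub_apply_add hsqrt c).div_const 4).tsum_le_tsum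
    (fun y => sq_sqrt_sub_sqrt_div_four_le_negMulLog_midpoint_sub (hp0 y) (hp0 (y + c)))
    ((summable_negMulLog_midpoint hp0 hp hH c).sub ((hH.add hHc).div_const 2))

end Translate

namespace PMF

variable {α : Type*}

lemma summable_toReal (μ : PMF α) : Summable fun a => (μ a).toReal :=
  ENNReal.summable_toReal (by simp [μ.tsum_coe])

lemma tsum_toReal (μ : PMF α) : ∑' a, (μ a).toReal = 1 := by
  rw [← ENNReal.tsum_toReal_eq μ.apply_ne_top, μ.tsum_coe, ENNReal.toReal_one]

end PMF

section Convolution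

variable {G : Type*} [AddCommGroup G]

lemma PMF.map_add_left_apply (μ : PMF G) (x z : G) : μ.map (x + ·) z = μ (z - x) := by
  rw [PMF.map_apply, tsum_eq_single (z - x)]
  · simp
  · intro y hy
    rw [if_neg]
    rintro rfl
    exact hy (by abel)

lemma pmfConv_twoPoint_apply (μ : PMF G) (a b z : G) :
    pmfConv ((PMF.uniformOfFintype Bool).map fun t => if t then a else b) μ z
      = 2⁻¹ * μ (z - a) + 2⁻¹ * μ (z - b) := by
  rw [pmfConv, PMF.bind_map, PMF.bind_apply, tsum_bool]
  simp only [Function.comp_apply, PMF.map_add_left_apply, PMF.uniformOfFintype_apply]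
  simp [add_comm]

lemma pmfEntropy_pmfConv_twoPoint (μ : PMF G) (a b : G) :
    pmfEntropy (pmfConv ((PMF.uniformOfFintype Bool).map fun t => if t then a else b) μ)
      = ∑' y, negMulLog (((μ y).toReal + (μ (y + (a - b))).toReal) / 2) := by
  rw [pmfEntropy, ← (Equiv.addRight a).tsum_eq]
  refine tsum_congr fun y => ?_
  rw [Equiv.coe_addRight, pmfConv_twoPoint_apply,
    ENNReal.toReal_add (ENNReal.mul_ne_top (by simp) (μ.apply_ne_top _))
      (ENNReal.mul_ne_top (by simp) (μ.apply_ne_top _))]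
  simp [ENNReal.toReal_mul, add_sub_assoc]
  ring_nf

end Convolution

theorem stmt7_general (M : ℝ) :
    ∃ η > (0 : ℝ), ∀ (G : Type) [AddCommGroup G] [Countable G],
      AddMonoid.IsTorsionFree G →
      ∀ μ : PMF G, (Summable fun a => Real.negMulLog ((μ a).toReal)) →
        pmfEntropy μ < M →
      ∀ a b : G, a ≠ b →
        pmfEntropy (pmfConv ((PMF.uniformOfFintype Bool).map fun t => if t then a else b) μ)
          > pmfEntropy μ + η := by
  obtain ⟨n, hn⟩ := exists_nat_ge (4 * exp M)
  have hn0 : 0 < n := by exact_mod_cast (by positivity : (0 : ℝ) < 4 * exp M).trans_le hn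
  set ε := exp (-(M / 2)) / (2 * n)
  refine ⟨ε ^ 2 / 8, by positivity, fun G _ _ htf μ hH hHM a b hab => ?_⟩
  set p : G → ℝ := fun y => (μ y).toReal
  have hp0 (y : G) : 0 ≤ p y := ENNReal.toReal_nonneg
  have hsqrt : ∀ y, √(p y) ^ 2 = p y := fun y => sq_sqrt (hp0 y)
  obtain ⟨x, hx⟩ := exists_exp_neg_lt_of_tsum_negMulLog_lt hp0 μ.summable_toReal μ.tsum_toReal hH hHM
  have hxM : exp (-(M / 2)) ≤ √(p x) := by
    have hsq : exp (-(M / 2)) ^ 2 = exp (-M) := by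
      rw [← exp_nat_mul]
      ring_nf
    rw [le_sqrt (by positivity) (hp0 x), hsq]
    exact hx.le
  have hxn : 4 ≤ (n + 1) * √(p x) ^ 2 := by
    rw [hsqrt]
    have : 4 ≤ n * exp (-M) := by
      rw [exp_neg, ← div_eq_mul_inv, le_div_iff₀ (exp_pos M)]
      exact hn
    nlinarith [exp_pos (-M)]
  have hd : ε ≤ √(∑' y, (√(p y) - √(p (y + (a - b)))) ^ 2) :=
    (div_le_div_of_nonneg_right hxM (by positivity)).trans <|
      div_two_mul_le_sqrt_tsum_sq_sub_apply_add (f := fun y => √(p y))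
        (μ.summable_toReal.congr fun y => (hsqrt y).symm)
        (by simp only [hsqrt]; exact μ.tsum_toReal.le) (htf _ (sub_ne_zero.2 hab)) hn0 hxn
  have hgain := tsum_sq_sqrt_sub_sqrt_div_four_le hp0 μ.summable_toReal hH (a - b)
  rw [le_sqrt (by positivity) (tsum_nonneg fun _ => sq_nonneg _)] at hd
  rw [pmfEntropy_pmfConv_twoPoint]
  change ∑' y, negMulLog ((p y + p (y + (a - b))) / 2) > ∑' y, negMulLog (p y) + ε ^ 2 / 8
  have hε : 0 < ε ^ 2 := by positivity
  linarith

/-- Entropy increase under convolution by a fair two-point measure on a countable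
torsion-free abelian group: for every `M > 1` there is `η > 0` such that for every `μ`
with finite entropy `H(μ) < M` and `a ≠ b`, setting `ν = (δ_a + δ_b)/2`,
`H(ν * μ) > H(μ) + η`. -/
theorem stmt7 (M : ℝ) (hM : 1 < M) :
    ∃ η > (0 : ℝ), ∀ (G : Type) [AddCommGroup G] [Countable G],
      AddMonoid.IsTorsionFree G →
      ∀ μ : PMF G, (Summable fun a => Real.negMulLog ((μ a).toReal)) →
        pmfEntropy μ < M →
      ∀ a b : G, a ≠ b →
        pmfEntropy (pmfConv ((PMF.uniformOfFintype Bool).map fun t => if t then a else b) μ)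
          > pmfEntropy μ + η :=
  stmt7_general M
end
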